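/- Uniqueness of solutions to the truncated BBGKY hierarchy: if {γ^{(n)}(t)}_{n=0}^N and {θ^{(n)}(t)}_{n=0}^N both lie in L^∞(ℝ, 𝔖_{1,H_n^0}(𝓗^n)), satisfy the Duhamel-form hierarchy γ^{(n)}(t) = e^{-itH_n} γ^{(n)}(0) e^{itH_n} − i(n+1) Σ_{j=1}^n ∫₀ᵗ e^{-i(t−s)H_n} Tr_{n+1}([h_{n+1}^{-1/2} w_{j,n+1} h_{n+1}^{-1/2}, h_{n+1}^{1/2} γ^{(n+1)}(s) h_{n+1}^{1/2}]) e^{i(t−s)H_n} ds with γ^{(N+1)} ≡ 0, and have the same initial data γ^{(n)}(0) = θ^{(n)}(0) for all n, then γ^{(n)}(t) = θ^{(n)}(t) for all n and t. -/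

import Mathlib

open scoped InnerProductSpace
open Filter MeasureTheory intervalIntegral

noncomputable section

universe u

section Defs

variable {E : Type u} [NormedAddCommGroup E] [InnerProductSpace ℂ E] [CompleteSpace E]

/-- The trace norm of `A` is at most `C`. -/
def TraceNormLE (A : E →L[ℂ] E) (C : ℝ) : Prop :=
  ∀ (n : ℕ) (e f : Fin n → E), Orthonormal ℂ e → Orthonormal ℂ f →
    ∑ i, ‖(⟪e i, A (f i)⟫_ℂ)‖ ≤ C

/-- `U` is a strongly continuous one-parameter unitary group. -/
def IsUnitaryGroup (U : ℝ → (E →L[ℂ] E)) : Prop :=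
  U 0 = 1 ∧ (∀ s t : ℝ, U (s + t) = (U s).comp (U t)) ∧
    (∀ t : ℝ, ContinuousLinearMap.adjoint (U t) = U (-t)) ∧
    ∀ x : E, Continuous fun t : ℝ => U t x

end Defs

variable {Hn : ℕ → Type u} [∀ n, NormedAddCommGroup (Hn n)]
  [∀ n, InnerProductSpace ℂ (Hn n)] [∀ n, CompleteSpace (Hn n)]

/-- A solution of the truncated BBGKY hierarchy, in Duhamel form:
`γ^{(n)}(t) = e^{-itH_n} γ^{(n)}(0) e^{itH_n}`
`− i(n+1) ∑_{j=1}^n ∫₀ᵗ e^{-i(t−s)H_n} Tr_{n+1}([W_{j,n+1}, Θ^{(n+1)}(s)]) e^{i(t−s)H_n} ds`,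
where `Θ^{(n+1)} = h_{n+1}^{1/2} γ^{(n+1)} h_{n+1}^{1/2}` (so that
`γ^{(n+1)} = g Θ^{(n+1)} g` with `g = h_{n+1}^{-1/2}` acting on the last particle) and
`W_{j,n+1} = h_{n+1}^{-1/2} w_{j,n+1} h_{n+1}^{-1/2}` is bounded; the solution is required
to lie in `L^∞(ℝ, 𝔖_{1,H_n^0})`. -/
def IsBBGKYSolution
    (ptr : ∀ m n : ℕ, (Hn m →L[ℂ] Hn m) → (Hn n →L[ℂ] Hn n))
    (U : ∀ n, ℝ → (Hn n →L[ℂ] Hn n))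
    (gO : ∀ n, Hn (n + 1) →L[ℂ] Hn (n + 1))
    (W : ∀ n, Fin n → (Hn (n + 1) →L[ℂ] Hn (n + 1)))
    (N : ℕ)
    (γ Θ : ∀ n, ℝ → (Hn n →L[ℂ] Hn n)) : Prop :=
  -- vanishing above the particle number cutoff (`γ^{(N+1)} ≡ 0`)
  (∀ n t, N < n → γ n t = 0 ∧ Θ n t = 0) ∧
  -- `γ^{(n+1)} = h_{n+1}^{-1/2} Θ^{(n+1)} h_{n+1}^{-1/2}`
  (∀ n t, γ (n + 1) t = (gO n).comp ((Θ (n + 1) t).comp (gO n))) ∧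
  -- uniform trace-norm (energy) bound: `L^∞(ℝ, 𝔖_{1,H^0})`
  (∃ C : ℝ, ∀ n t, TraceNormLE (γ n t) C ∧ TraceNormLE (Θ n t) C) ∧
  -- integrability of the Duhamel integrand
  (∀ (n : ℕ) (j : Fin n) (t : ℝ), IntervalIntegrable
    (fun s => (U n (t - s)).comp
      ((ptr (n + 1) n ((W n j).comp (Θ (n + 1) s) - (Θ (n + 1) s).comp (W n j))).comp
        (U n (s - t)))) volume 0 t) ∧
  -- the Duhamel-form hierarchy
  (∀ n, n ≤ N → ∀ t : ℝ,
    γ n t = (U n t).comp ((γ n 0).comp (U n (-t))) -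
      (Complex.I * ((n : ℂ) + 1)) • ∑ j : Fin n, ∫ s in (0:ℝ)..t,
        (U n (t - s)).comp
          ((ptr (n + 1) n ((W n j).comp (Θ (n + 1) s) - (Θ (n + 1) s).comp (W n j))).comp
            (U n (s - t))))

/-!
The hierarchy is triangular. Above `N` everything vanishes, and for `n ≤ N` the Duhamel
equation expresses `γ⁽ⁿ⁾(t)` through `γ⁽ⁿ⁾(0)` and `Θ⁽ⁿ⁺¹⁾` alone. Conversely `Θ⁽ⁿ⁺¹⁾` is
recovered from `γ⁽ⁿ⁺¹⁾ = g Θ⁽ⁿ⁺¹⁾ g`: the action of `g` on the last particle is self-adjoint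
with dense range (because `g` is), hence injective, and then so is `A ↦ g A g`. A downward
induction from `n = N` gives uniqueness.
-/

open scoped InnerProduct

namespace IsSelfAdjoint

variable {E : Type*} [NormedAddCommGroup E] [InnerProductSpace ℂ E] [CompleteSpace E]
  {T : E →L[ℂ] E}

theorem denseRange_iff_injective (hT : IsSelfAdjoint T) :
    DenseRange T ↔ Function.Injective T := by
  have hclosure : DenseRange T ↔ (LinearMap.range (T : E →ₗ[ℂ] E)).topologicalClosure = ⊤ := by
    rw [← Submodule.dense_iff_topologicalClosure_eq_top, LinearMap.coe_range]
    rfl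
  rw [hclosure, Submodule.topologicalClosure_eq_top_iff, ContinuousLinearMap.orthogonal_range,
    hT.adjoint_eq]
  exact LinearMap.ker_eq_bot

theorem sandwich_injective (hT : IsSelfAdjoint T) (hinj : Function.Injective T) :
    Function.Injective fun A : E →L[ℂ] E => T ∘L A ∘L T := by
  intro A B h
  have hright : A ∘L T = B ∘L T :=
    ContinuousLinearMap.ext fun v => hinj (congrArg (fun C : E →L[ℂ] E => C v) h)
  have hleft : T ∘L A† = T ∘L B† := by
    simpa only [ContinuousLinearMap.adjoint_comp, hT.adjoint_eq] using congrArg (·†) hright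
  exact ContinuousLinearMap.adjoint.injective <|
    ContinuousLinearMap.ext fun v => hinj (congrArg (fun C : E →L[ℂ] E => C v) hleft)

end IsSelfAdjoint

theorem ContinuousLinearMap.eq_of_inner_eq_of_dense_span
    {E : Type*} [NormedAddCommGroup E] [InnerProductSpace ℂ E] {s t : Set E}
    (hs : (Submodule.span ℂ s).topologicalClosure = ⊤)
    (ht : (Submodule.span ℂ t).topologicalClosure = ⊤) {A B : E →L[ℂ] E}
    (h : ∀ a ∈ s, ∀ b ∈ t, ⟪a, A b⟫_ℂ = ⟪a, B b⟫_ℂ) : A = B := by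
  refine ext_on (Submodule.dense_iff_topologicalClosure_eq_top.mpr ht) fun b hb => ?_
  have hfun : innerSL ℂ (A b) = innerSL ℂ (B b) :=
    ext_on (Submodule.dense_iff_topologicalClosure_eq_top.mpr hs) fun a ha => by
      simp only [innerSL_apply_apply]
      rw [← inner_conj_symm, h a ha b hb, inner_conj_symm]
  exact ext_inner_right ℂ fun v => congrArg (fun φ : E →L[ℂ] ℂ => φ v) hfun

section ElementaryTensors

variable {E H F : Type*} [NormedAddCommGroup E] [InnerProductSpace ℂ E]
  [NormedAddCommGroup H] [InnerProductSpace ℂ H] [NormedAddCommGroup F] [InnerProductSpace ℂ F]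
  {tp : E → H → F} (htp_inner : ∀ x y f f', ⟪tp x f, tp y f'⟫_ℂ = ⟪x, y⟫_ℂ * ⟪f, f'⟫_ℂ)
  (htp_dense : (Submodule.span ℂ (Set.range fun p : E × H => tp p.1 p.2)).topologicalClosure = ⊤)
  {g : H →L[ℂ] H} {T : F →L[ℂ] F} (hT : ∀ x f, T (tp x f) = tp x (g f))
include htp_inner

theorem norm_tensor_eq_mul (x : E) (f : H) : ‖tp x f‖ = ‖x‖ * ‖f‖ := by
  have hsq : ‖tp x f‖ ^ 2 = (‖x‖ * ‖f‖) ^ 2 := by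
    have := htp_inner x x f f
    simp only [inner_self_eq_norm_sq_to_K] at this
    exact_mod_cast this.trans (mul_pow _ _ _).symm
  exact (sq_eq_sq₀ (norm_nonneg _) (by positivity)).mp hsq

theorem continuous_tensor (x : E) (hlin : IsLinearMap ℂ (tp x)) :
    Continuous (tp x) :=
  AddMonoidHomClass.continuous_of_bound (IsLinearMap.mk' _ hlin) ‖x‖ fun f => by
    simp [norm_tensor_eq_mul htp_inner]

include htp_dense hT

theorem isSelfAdjoint_of_apply_tensor [CompleteSpace H] [CompleteSpace F] (hg : IsSelfAdjoint g) :
    IsSelfAdjoint T := by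
  refine ContinuousLinearMap.isSelfAdjoint_iff'.mpr <|
    ContinuousLinearMap.eq_of_inner_eq_of_dense_span htp_dense htp_dense ?_
  rintro _ ⟨⟨x, f⟩, rfl⟩ _ ⟨⟨y, f'⟩, rfl⟩
  rw [ContinuousLinearMap.adjoint_inner_right, hT, hT, htp_inner, htp_inner,
    ← ContinuousLinearMap.adjoint_inner_left, hg.adjoint_eq]

theorem denseRange_of_apply_tensor (hlin : ∀ x, IsLinearMap ℂ (tp x)) (hg : DenseRange g) :
    DenseRange T := by
  have hsub : Set.range (fun p : E × H => tp p.1 p.2) ⊆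
      (LinearMap.range (T : F →ₗ[ℂ] F)).topologicalClosure := by
    rintro _ ⟨⟨x, f⟩, rfl⟩
    have hmaps : Set.MapsTo (tp x) (Set.range g) (LinearMap.range (T : F →ₗ[ℂ] F)) := by
      rintro _ ⟨f', rfl⟩
      exact ⟨tp x f', hT x f'⟩
    simpa only [Submodule.topologicalClosure_coe] using
      map_mem_closure (continuous_tensor htp_inner x (hlin x)) (hg f) hmaps
  have htop : (LinearMap.range (T : F →ₗ[ℂ] F)).topologicalClosure = ⊤ :=
    top_unique <| htp_dense ▸ Submodule.topologicalClosure_minimal _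
      (Submodule.span_le.mpr hsub) (Submodule.isClosed_topologicalClosure _)
  rw [← Submodule.dense_iff_topologicalClosure_eq_top, LinearMap.coe_range] at htop
  exact htop

end ElementaryTensors

namespace IsBBGKYSolution

omit [∀ n, CompleteSpace (Hn n)]

variable {ptr : ∀ m n : ℕ, (Hn m →L[ℂ] Hn m) → (Hn n →L[ℂ] Hn n)}
  {U : ∀ n, ℝ → (Hn n →L[ℂ] Hn n)} {gO : ∀ n, Hn (n + 1) →L[ℂ] Hn (n + 1)}
  {W : ∀ n, Fin n → (Hn (n + 1) →L[ℂ] Hn (n + 1))} {N : ℕ} {γ Θ γ' Θ' : ∀ n, ℝ → (Hn n →L[ℂ] Hn n)}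

theorem congr_of_succ (hsol : IsBBGKYSolution ptr U gO W N γ Θ)
    (hsol' : IsBBGKYSolution ptr U gO W N γ' Θ') {n : ℕ} (hn : n ≤ N) (h0 : γ n 0 = γ' n 0)
    (hΘ : ∀ s, Θ (n + 1) s = Θ' (n + 1) s) (t : ℝ) : γ n t = γ' n t := by
  rw [hsol.2.2.2.2 n hn t, hsol'.2.2.2.2 n hn t, h0]
  simp only [hΘ]

theorem eq_of_initial_eq (hsol : IsBBGKYSolution ptr U gO W N γ Θ)
    (hsol' : IsBBGKYSolution ptr U gO W N γ' Θ') (hinit : ∀ n, γ n 0 = γ' n 0)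
    (hΘ : ∀ n t, γ (n + 1) t = γ' (n + 1) t → Θ (n + 1) t = Θ' (n + 1) t) :
    ∀ n t, γ n t = γ' n t := by
  have hzero : ∀ n t, N < n → γ n t = γ' n t ∧ Θ n t = Θ' n t := fun n t hn => by
    rw [(hsol.1 n t hn).1, (hsol.1 n t hn).2, (hsol'.1 n t hn).1, (hsol'.1 n t hn).2]
    exact ⟨rfl, rfl⟩
  have hΘall : ∀ n s, Θ (n + 1) s = Θ' (n + 1) s := by
    intro n
    rcases le_or_gt N n with hNn | hnN
    · exact fun s => (hzero (n + 1) s (Nat.lt_succ_of_le hNn)).2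
    refine Nat.decreasingInduction (motive := fun k _ => ∀ s, Θ (k + 1) s = Θ' (k + 1) s)
      (fun k hk ih s => hΘ k s (congr_of_succ hsol hsol' hk (hinit _) ih s))
      (fun s => (hzero (N + 1) s N.lt_succ_self).2) hnN.le
  intro n t
  rcases le_or_gt n N with hn | hn
  · exact congr_of_succ hsol hsol' hn (hinit n) (hΘall n) t
  · exact (hzero n t hn).1

end IsBBGKYSolution

theorem bbgky_hierarchy_uniqueness_general
    {H : Type u} [NormedAddCommGroup H] [InnerProductSpace ℂ H] [CompleteSpace H]
    (tp : ∀ n, Hn n → H → Hn (n + 1))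
    (htp_inner : ∀ n (x y : Hn n) (f g : H),
      ⟪tp n x f, tp n y g⟫_ℂ = ⟪x, y⟫_ℂ * ⟪f, g⟫_ℂ)
    (htp_linR : ∀ n (x : Hn n), IsLinearMap ℂ (tp n x))
    (htp_dense : ∀ n, (Submodule.span ℂ
      (Set.range fun p : Hn n × H => tp n p.1 p.2)).topologicalClosure = ⊤)
    (ptr : ∀ m n : ℕ, (Hn m →L[ℂ] Hn m) → (Hn n →L[ℂ] Hn n))
    -- the dynamics `U n t = e^{-itH_n}` generated by the interacting Hamiltonians
    (U : ∀ n, ℝ → (Hn n →L[ℂ] Hn n))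
    -- `g = h^{-1/2}` (with `h ≥ 1`) and its action `gO n` on the last particle
    (g : H →L[ℂ] H)
    (hgpos : g.IsPositive) (hginj : Function.Injective g)
    (gO : ∀ n, Hn (n + 1) →L[ℂ] Hn (n + 1))
    (hgO : ∀ n (x : Hn n) (f : H), gO n (tp n x f) = tp n x (g f))
    -- the bounded sandwiched interactions `W_{j,n+1} = h_{n+1}^{-1/2} w_{j,n+1} h_{n+1}^{-1/2}`
    (W : ∀ n, Fin n → (Hn (n + 1) →L[ℂ] Hn (n + 1)))
    (N : ℕ)
    (γ Θ γ' Θ' : ∀ n, ℝ → (Hn n →L[ℂ] Hn n))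
    (hsol : IsBBGKYSolution ptr U gO W N γ Θ)
    (hsol' : IsBBGKYSolution ptr U gO W N γ' Θ')
    (hinit : ∀ n, γ n 0 = γ' n 0) :
    ∀ n t, γ n t = γ' n t := by
  have hg : IsSelfAdjoint g := hgpos.isSelfAdjoint
  have hgO_sa : ∀ n, IsSelfAdjoint (gO n) := fun n =>
    isSelfAdjoint_of_apply_tensor (htp_inner n) (htp_dense n) (hgO n) hg
  have hgO_inj : ∀ n, Function.Injective (gO n) := fun n =>
    (hgO_sa n).denseRange_iff_injective.mp <| denseRange_of_apply_tensor (htp_inner n)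
      (htp_dense n) (hgO n) (htp_linR n) (hg.denseRange_iff_injective.mpr hginj)
  refine hsol.eq_of_initial_eq hsol' hinit fun n t hγ =>
    (hgO_sa n).sandwich_injective (hgO_inj n) ?_
  simpa only [hsol.2.1 n t, hsol'.2.1 n t] using hγ

/-- **Uniqueness for the truncated BBGKY hierarchy.**  Two solutions of the hierarchy in
`L^∞(ℝ, 𝔖_{1,H^0})` with the same initial data coincide for all times (the hierarchy is
triangular: the top equation is free and uniqueness propagates downward). -/
theorem bbgky_hierarchy_uniqueness
    {H : Type u} [NormedAddCommGroup H] [InnerProductSpace ℂ H] [CompleteSpace H]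
    (tp : ∀ n, Hn n → H → Hn (n + 1))
    (htp_inner : ∀ n (x y : Hn n) (f g : H),
      ⟪tp n x f, tp n y g⟫_ℂ = ⟪x, y⟫_ℂ * ⟪f, g⟫_ℂ)
    (htp_linL : ∀ n (f : H), IsLinearMap ℂ (fun x : Hn n => tp n x f))
    (htp_linR : ∀ n (x : Hn n), IsLinearMap ℂ (tp n x))
    (htp_dense : ∀ n, (Submodule.span ℂ
      (Set.range fun p : Hn n × H => tp n p.1 p.2)).topologicalClosure = ⊤)
    (ptr : ∀ m n : ℕ, (Hn m →L[ℂ] Hn m) → (Hn n →L[ℂ] Hn n))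
    (hptr_lin : ∀ m n, IsLinearMap ℂ (ptr m n))
    (hptr_id : ∀ n G, ptr n n G = G)
    (hptr_step : ∀ n (G : Hn (n + 1) →L[ℂ] Hn (n + 1)) (x y : Hn n)
      (ι : Type u) (e : HilbertBasis ι ℂ H),
      HasSum (fun i => ⟪tp n x (e i), G (tp n y (e i))⟫_ℂ) ⟪x, ptr (n + 1) n G y⟫_ℂ)
    (hptr_comp : ∀ m n : ℕ, n ≤ m → ∀ (G : Hn (m + 1) →L[ℂ] Hn (m + 1)),
      ptr (m + 1) n G = ptr m n (ptr (m + 1) m G))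
    -- the dynamics `U n t = e^{-itH_n}` generated by the interacting Hamiltonians
    (U : ∀ n, ℝ → (Hn n →L[ℂ] Hn n))
    (hU : ∀ n, IsUnitaryGroup (U n))
    -- `g = h^{-1/2}` (with `h ≥ 1`) and its action `gO n` on the last particle
    (g : H →L[ℂ] H)
    (hgpos : g.IsPositive) (hginj : Function.Injective g) (hgnorm : ‖g‖ ≤ 1)
    (gO : ∀ n, Hn (n + 1) →L[ℂ] Hn (n + 1))
    (hgO : ∀ n (x : Hn n) (f : H), gO n (tp n x f) = tp n x (g f))
    -- the bounded sandwiched interactions `W_{j,n+1} = h_{n+1}^{-1/2} w_{j,n+1} h_{n+1}^{-1/2}`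
    (W : ∀ n, Fin n → (Hn (n + 1) →L[ℂ] Hn (n + 1)))
    (N : ℕ)
    (γ Θ γ' Θ' : ∀ n, ℝ → (Hn n →L[ℂ] Hn n))
    (hsol : IsBBGKYSolution ptr U gO W N γ Θ)
    (hsol' : IsBBGKYSolution ptr U gO W N γ' Θ')
    (hinit : ∀ n, γ n 0 = γ' n 0) :
    ∀ n t, γ n t = γ' n t :=
  bbgky_hierarchy_uniqueness_general tp htp_inner htp_linR htp_dense ptr U g hgpos hginj gO hgO W N
    γ Θ γ' Θ' hsol hsol' hinit
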